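/- arXiv:1805.02853 — 4 statements merged into one kernel-verified Lean document; each statement's English description precedes it below -/
import Mathlib

section
/- Let X be a Banach space and let B : X × X → X be a continuous bilinear map, with operator norm ‖B‖ := sup{‖B(u,v)‖ : ‖u‖ ≤ 1, ‖v‖ ≤ 1}. Let ε > 0 satisfy ε < 1/(4‖B‖). Then for every y ∈ X with ‖y‖ ≤ ε there exists a unique x ∈ X with ‖x‖ ≤ 2ε such that x = y + B(x,x). -/
/-! The map `T x = y + B(x, x)` sends the closed ball of radius `2ε` into itself, because
`‖B(x, x)‖ ≤ 4‖B‖ε² ≤ ε` there, and is a contraction on it with constant `4‖B‖ε < 1`, because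
`B(a, a) - B(b, b) = B(a, a - b) + B(a - b, b)`. The Banach fixed point theorem on this
closed ball gives existence and uniqueness. -/

open Set Metric NNReal Function

theorem Set.MapsTo.existsUnique_isFixedPt_of_lipschitzOnWith {α : Type*} [MetricSpace α]
    {f : α → α} {s : Set α} {K : ℝ≥0} (hsf : MapsTo f s s) (hsc : IsComplete s)
    (hs : s.Nonempty) (hK : K < 1) (hf : LipschitzOnWith K f s) :
    ∃! x, x ∈ s ∧ IsFixedPt f x := by
  have : CompleteSpace s := hsc.completeSpace_coe
  have : Nonempty s := hs.to_subtype
  have hg : ContractingWith K (hsf.restrict f s s) := ⟨hK, hf.mapsToRestrict hsf⟩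
  refine ⟨hg.fixedPoint, ⟨hg.fixedPoint.2, congrArg Subtype.val hg.fixedPoint_isFixedPt⟩,
    ?_⟩
  rintro x ⟨hx, hfx⟩
  exact congrArg Subtype.val (hg.fixedPoint_unique (x := ⟨x, hx⟩) (Subtype.ext hfx))

namespace ContinuousLinearMap

variable {𝕜 E F : Type*} [NontriviallyNormedField 𝕜] [SeminormedAddCommGroup E]
  [NormedSpace 𝕜 E] [SeminormedAddCommGroup F] [NormedSpace 𝕜 F]

theorem norm_apply_self_sub_apply_self_le (B : E →L[𝕜] E →L[𝕜] F) (a b : E) :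
    ‖B a a - B b b‖ ≤ ‖B‖ * (‖a‖ + ‖b‖) * ‖a - b‖ := by
  have hsplit : B a a - B b b = B a (a - b) + B (a - b) b := by
    simp only [map_sub, sub_apply]
    abel
  calc ‖B a a - B b b‖ ≤ ‖B a (a - b)‖ + ‖B (a - b) b‖ := hsplit ▸ norm_add_le _ _
    _ ≤ ‖B‖ * ‖a‖ * ‖a - b‖ + ‖B‖ * ‖a - b‖ * ‖b‖ :=
      add_le_add (B.le_opNorm₂ _ _) (B.le_opNorm₂ _ _)
    _ = ‖B‖ * (‖a‖ + ‖b‖) * ‖a - b‖ := by ring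

theorem lipschitzOnWith_const_add_apply_self_closedBall (B : E →L[𝕜] E →L[𝕜] E) (y : E)
    (r : ℝ) :
    LipschitzOnWith (2 * ‖B‖ * r).toNNReal (fun x ↦ y + B x x) (closedBall 0 r) := by
  refine LipschitzOnWith.of_dist_le_mul fun a ha b hb ↦ ?_
  rw [mem_closedBall_zero_iff] at ha hb
  have hr : 0 ≤ r := (norm_nonneg a).trans ha
  rw [Real.coe_toNNReal _ (by positivity), dist_eq_norm, dist_eq_norm, add_sub_add_left_eq_sub]
  calc ‖B a a - B b b‖ ≤ ‖B‖ * (‖a‖ + ‖b‖) * ‖a - b‖ :=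
        B.norm_apply_self_sub_apply_self_le a b
    _ ≤ ‖B‖ * (r + r) * ‖a - b‖ := by gcongr
    _ = 2 * ‖B‖ * r * ‖a - b‖ := by ring

theorem mapsTo_const_add_apply_self_closedBall (B : E →L[𝕜] E →L[𝕜] E) {y : E} {ε : ℝ}
    (hy : ‖y‖ ≤ ε) (hBε : 4 * ‖B‖ * ε ≤ 1) :
    MapsTo (fun x ↦ y + B x x) (closedBall 0 (2 * ε)) (closedBall 0 (2 * ε)) := by
  intro x hx
  rw [mem_closedBall_zero_iff] at hx ⊢
  have hε : 0 ≤ ε := (norm_nonneg y).trans hy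
  have hBxx : ‖B x x‖ ≤ ε :=
    calc ‖B x x‖ ≤ ‖B‖ * ‖x‖ * ‖x‖ := B.le_opNorm₂ x x
      _ ≤ ‖B‖ * (2 * ε) * (2 * ε) := by gcongr
      _ = (4 * ‖B‖ * ε) * ε := by ring
      _ ≤ 1 * ε := by gcongr
      _ = ε := one_mul ε
  calc ‖y + B x x‖ ≤ ‖y‖ + ‖B x x‖ := norm_add_le _ _
    _ ≤ 2 * ε := by linarith

end ContinuousLinearMap

theorem bilinear_fixed_point_general {X : Type*} [NormedAddCommGroup X] [NormedSpace ℝ X]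
    [CompleteSpace X] (B : X →L[ℝ] X →L[ℝ] X) (ε : ℝ)
    (hsmall : 4 * ‖B‖ * ε < 1) :
    ∀ y : X, ‖y‖ ≤ ε → ∃! x : X, ‖x‖ ≤ 2 * ε ∧ x = y + B x x := by
  intro y hy
  have hε : 0 ≤ ε := (norm_nonneg y).trans hy
  have hK : (2 * ‖B‖ * (2 * ε)).toNNReal < 1 := by
    rw [Real.toNNReal_lt_one]
    linarith
  have hMaps := B.mapsTo_const_add_apply_self_closedBall hy hsmall.le
  have hLip := B.lipschitzOnWith_const_add_apply_self_closedBall y (2 * ε)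
  simpa only [mem_closedBall_zero_iff, IsFixedPt, eq_comm (b := _ + _)] using
    hMaps.existsUnique_isFixedPt_of_lipschitzOnWith isClosed_closedBall.isComplete
      (nonempty_closedBall.2 (by positivity)) hK hLip

/-- **Fixed point lemma for bilinear maps.** Let X be a Banach space and B : X × X → X a
continuous bilinear map with operator norm ‖B‖ = sup{‖B(u,v)‖ : ‖u‖ ≤ 1, ‖v‖ ≤ 1}.
If ε > 0 satisfies ε < 1/(4‖B‖) (i.e. 4‖B‖ε < 1), then for every y ∈ X with ‖y‖ ≤ ε there is a
unique x ∈ X with ‖x‖ ≤ 2ε satisfying x = y + B(x,x). -/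
theorem bilinear_fixed_point {X : Type*} [NormedAddCommGroup X] [NormedSpace ℝ X]
    [CompleteSpace X] (B : X →L[ℝ] X →L[ℝ] X) (ε : ℝ) (hε : 0 < ε)
    (hsmall : 4 * ‖B‖ * ε < 1) :
    ∀ y : X, ‖y‖ ≤ ε → ∃! x : X, ‖x‖ ≤ 2 * ε ∧ x = y + B x x :=
  bilinear_fixed_point_general B ε hsmall
end

section
/- For every ξ ∈ ℝ³ the matrix A(ξ) is Hermitian, every eigenvalue of A(ξ) is at least |ξ|² + 1 − √(|ξ|² + 1) ≥ |ξ|²/2, and consequently for every t ≥ 0 the operator norm (with respect to the Euclidean norm on ℂ⁶) of the matrix exponential e^{−tA(ξ)} satisfies ‖e^{−tA(ξ)}‖ ≤ e^{−t(|ξ|²+1−√(|ξ|²+1))} ≤ e^{−t|ξ|²/2}. -/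
open MeasureTheory ENNReal Real Filter
open scoped RealInnerProductSpace

noncomputable section

/-- Physical/frequency space ℝ³ with the Euclidean norm. -/
abbrev R3 := EuclideanSpace ℝ (Fin 3)

/-- Vector values ℂ⁶ = ℂ³ × ℂ³ (velocity and micro-rotation components). -/
abbrev C6 := (Fin 3 ⊕ Fin 3) → ℂ
/-- The 3×3 matrix B(ξ) = i·[[0, ξ₃, −ξ₂], [−ξ₃, 0, ξ₁], [ξ₂, −ξ₁, 0]]. -/
def Bm (ξ : R3) : Matrix (Fin 3) (Fin 3) ℂ :=
  Complex.I • Matrix.of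
    ![![0, (ξ 2 : ℂ), -(ξ 1 : ℂ)],
      ![-(ξ 2 : ℂ), 0, (ξ 0 : ℂ)],
      ![(ξ 1 : ℂ), -(ξ 0 : ℂ), 0]]

/-- The 3×3 matrix C(ξ) = ξξᵀ with entries ξ_iξ_j. -/
def Cm (ξ : R3) : Matrix (Fin 3) (Fin 3) ℂ :=
  Matrix.of fun i j => ((ξ i * ξ j : ℝ) : ℂ)

/-- The 6×6 symbol A(ξ) = [[|ξ|²I₃, B(ξ)], [B(ξ), (|ξ|²+2)I₃ + C(ξ)]] of the
linearized micropolar system (κ = μ = 1, χ = ν = 1/2). -/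
def Am (ξ : R3) : Matrix (Fin 3 ⊕ Fin 3) (Fin 3 ⊕ Fin 3) ℂ :=
  Matrix.fromBlocks (((‖ξ‖ ^ 2 : ℝ) : ℂ) • 1) (Bm ξ) (Bm ξ)
    (((‖ξ‖ ^ 2 + 2 : ℝ) : ℂ) • 1 + Cm ξ)

/-- The semigroup symbol e^{−tA(ξ)}. -/
def expM (t : ℝ) (ξ : R3) : Matrix (Fin 3 ⊕ Fin 3) (Fin 3 ⊕ Fin 3) ℂ :=
  NormedSpace.exp ((-(t : ℂ)) • Am ξ)

/-!
Put `s = √(‖ξ‖² + 1)` and `c = ‖ξ‖² + 1 - s`. Then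
`A(ξ) - c I = [[(s - 1) I, B], [B, (s + 1) I + C]]`, and since `B² = ‖ξ‖² I - C` and
`(s - 1)(s + 1) = ‖ξ‖²`, the Schur complement of the scalar block `(s + 1) I` in
`[[(s - 1) I, B], [B, (s + 1) I]]` is `C / (s + 1) ⪰ 0`. Hence `A(ξ) ⪰ c I`, and the bound on
`e^{-tA(ξ)}` follows by diagonalising the Hermitian matrix `A(ξ)` with a unitary.
-/

open Matrix
open scoped ComplexOrder

theorem RCLike.norm_exp_ofReal {𝕜 : Type*} [RCLike 𝕜] (r : ℝ) :
    ‖NormedSpace.exp (r : 𝕜)‖ = Real.exp r := by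
  rw [← RCLike.algebraMap_eq_ofReal, ← NormedSpace.algebraMap_exp_comm, ← Real.exp_eq_exp_ℝ,
    norm_algebraMap', Real.norm_of_nonneg (Real.exp_nonneg r)]

namespace Matrix

variable {𝕜 : Type*} [RCLike 𝕜] {m n : Type*} [Fintype m] [Fintype n] [DecidableEq n]

theorem PosSemidef.fromBlocks_zero_zero_zero {C : Matrix n n 𝕜} (hC : C.PosSemidef) :
    (fromBlocks (0 : Matrix m m 𝕜) 0 0 C).PosSemidef := by
  simpa [conjTranspose_fromCols_eq_fromRows_conjTranspose, fromRows_mul_fromCols,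
    ← fromCols_fromRows_eq_fromBlocks] using
    hC.conjTranspose_mul_mul_same (fromCols (0 : Matrix n m 𝕜) (1 : Matrix n n 𝕜))

theorem posSemidef_fromBlocks_smul_one_add [DecidableEq m] {a b : ℝ} (hb : 0 < b) (B : Matrix m n 𝕜)
    {C : Matrix n n 𝕜} (hC : C.PosSemidef) (hB : ((a * b) • 1 - B * Bᴴ).PosSemidef) :
    (fromBlocks (a • 1) B Bᴴ (b • 1 + C)).PosSemidef := by
  rw [show fromBlocks (a • 1) B Bᴴ (b • 1 + C) =
      fromBlocks (a • 1) B Bᴴ (b • 1) + fromBlocks 0 0 0 C by simp [fromBlocks_add]]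
  refine PosSemidef.add ?_ hC.fromBlocks_zero_zero_zero
  have hD : (b • 1 : Matrix n n 𝕜).PosDef := PosDef.one.smul hb
  have := hD.isUnit.invertible
  have hinv : (b • 1 : Matrix n n 𝕜)⁻¹ = b⁻¹ • 1 := by
    refine inv_eq_left_inv ?_
    rw [smul_mul_smul, inv_mul_cancel₀ hb.ne', one_smul, one_mul]
  have hschur : a • 1 - B * (b • 1 : Matrix n n 𝕜)⁻¹ * Bᴴ = b⁻¹ • ((a * b) • 1 - B * Bᴴ) := by
    rw [hinv, smul_sub, smul_smul, mul_comm a, inv_mul_cancel_left₀ hb.ne', Matrix.mul_smul,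
      Matrix.mul_one, Matrix.smul_mul]
  rw [PosDef.fromBlocks₂₂ _ _ hD, hschur]
  exact hB.smul (inv_nonneg.2 hb.le)

theorem le_of_mem_spectrum_of_posSemidef_sub {A : Matrix n n 𝕜} {c μ : 𝕜}
    (h : (A - c • 1).PosSemidef) (hμ : μ ∈ spectrum 𝕜 A) : c ≤ μ := by
  have hshift : μ - c ∈ spectrum 𝕜 (A - c • 1) := by
    rw [← Algebra.algebraMap_eq_smul_one, ← spectrum.sub_singleton_eq]
    exact Set.sub_mem_sub hμ rfl
  exact sub_nonneg.1 ((posSemidef_iff_isHermitian_and_spectrum_nonneg.1 h).2 hshift)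

theorem IsHermitian.le_eigenvalues_of_posSemidef_sub {A : Matrix n n 𝕜} (hA : A.IsHermitian)
    {c : ℝ} (h : (A - (c : 𝕜) • 1).PosSemidef) (i : n) : c ≤ hA.eigenvalues i :=
  RCLike.ofReal_le_ofReal.1 <| le_of_mem_spectrum_of_posSemidef_sub h <|
    hA.spectrum_eq_image_range ▸ ⟨_, Set.mem_range_self i, rfl⟩

theorem IsHermitian.exp_smul_eq {A : Matrix n n 𝕜} (hA : A.IsHermitian) (z : 𝕜) :
    NormedSpace.exp (z • A) = (hA.eigenvectorUnitary : Matrix n n 𝕜) *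
      diagonal (fun i => NormedSpace.exp (z * hA.eigenvalues i)) *
        star (hA.eigenvectorUnitary : Matrix n n 𝕜) := by
  have hconj := exp_units_conj (Unitary.toUnits hA.eigenvectorUnitary)
    (z • diagonal (RCLike.ofReal ∘ hA.eigenvalues))
  simp only [Unitary.val_toUnits_apply, Unitary.val_inv_toUnits_apply, ← Unitary.star_eq_inv,
    Unitary.coe_star, mul_smul_comm, smul_mul_assoc] at hconj
  conv_lhs => rw [hA.spectral_theorem, Unitary.conjStarAlgAut_apply]
  rw [hconj, ← diagonal_smul, exp_diagonal, Pi.exp_def]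
  rfl

theorem norm_toEuclideanCLM_unitary_mul_diagonal_mul_star {U : Matrix n n 𝕜}
    (hU : U ∈ unitary (Matrix n n 𝕜)) (v : n → 𝕜) :
    ‖toEuclideanCLM (𝕜 := 𝕜) (U * diagonal v * star U)‖ = ‖v‖ := by
  open scoped Matrix.Norms.L2Operator in
  rw [← cstar_norm_def, show U = (⟨U, hU⟩ : unitary (Matrix n n 𝕜)) from rfl, ← Unitary.coe_star,
    mul_assoc, CStarRing.norm_coe_unitary_mul, CStarRing.norm_mul_coe_unitary, l2_opNorm_diagonal]

theorem IsHermitian.norm_toEuclideanCLM_exp_neg_smul_le {A : Matrix n n 𝕜} (hA : A.IsHermitian)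
    {c t : ℝ} (hc : ∀ i, c ≤ hA.eigenvalues i) (ht : 0 ≤ t) :
    ‖toEuclideanCLM (𝕜 := 𝕜) (NormedSpace.exp ((-(t : 𝕜)) • A))‖ ≤ Real.exp (-t * c) := by
  rw [hA.exp_smul_eq, norm_toEuclideanCLM_unitary_mul_diagonal_mul_star hA.eigenvectorUnitary.2]
  refine (pi_norm_le_iff_of_nonneg (Real.exp_nonneg _)).2 fun i => ?_
  rw [show -(t : 𝕜) * hA.eigenvalues i = ((-t * hA.eigenvalues i : ℝ) : 𝕜) by push_cast; ring,
    RCLike.norm_exp_ofReal]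
  exact Real.exp_le_exp.2 (by linarith [mul_le_mul_of_nonneg_left (hc i) ht])

end Matrix

theorem half_le_add_one_sub_sqrt {x : ℝ} (hx : -1 ≤ x) : x / 2 ≤ x + 1 - √(x + 1) := by
  nlinarith [Real.sq_sqrt (by linarith : 0 ≤ x + 1), sq_nonneg (√(x + 1) - 1)]

theorem EuclideanSpace.norm_sq_fin_three (x : EuclideanSpace ℝ (Fin 3)) :
    ‖x‖ ^ 2 = x 0 ^ 2 + x 1 ^ 2 + x 2 ^ 2 := by
  simp [EuclideanSpace.norm_sq_eq, Fin.sum_univ_three]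

theorem Bm_conjTranspose (ξ : R3) : (Bm ξ)ᴴ = Bm ξ := by
  ext i j
  fin_cases i <;> fin_cases j <;> simp [Bm]

theorem Bm_mul_self (ξ : R3) : Bm ξ * Bm ξ = ‖ξ‖ ^ 2 • (1 : Matrix (Fin 3) (Fin 3) ℂ) - Cm ξ := by
  rw [EuclideanSpace.norm_sq_fin_three]
  ext i j
  fin_cases i <;> fin_cases j <;> simp [Bm, Cm, Matrix.mul_apply, Fin.sum_univ_three] <;>
    ring_nf <;> simp

theorem Cm_posSemidef (ξ : R3) : (Cm ξ).PosSemidef := by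
  convert posSemidef_vecMulVec_self_star (fun i => (ξ i : ℂ)) using 1
  ext i j
  simp [Cm, vecMulVec]

theorem Am_isHermitian (ξ : R3) : (Am ξ).IsHermitian :=
  IsHermitian.fromBlocks (by simp [IsHermitian]) (Bm_conjTranspose ξ)
    (by simpa [IsHermitian] using (Cm_posSemidef ξ).isHermitian)

theorem Am_sub_smul_one_posSemidef (ξ : R3) :
    (Am ξ - ((‖ξ‖ ^ 2 + 1 - √(‖ξ‖ ^ 2 + 1) : ℝ) : ℂ) • 1).PosSemidef := by
  set s := √(‖ξ‖ ^ 2 + 1)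
  have hs : s ^ 2 = ‖ξ‖ ^ 2 + 1 := Real.sq_sqrt (by positivity)
  have hblocks : Am ξ - ((‖ξ‖ ^ 2 + 1 - s : ℝ) : ℂ) • 1 =
      fromBlocks ((s - 1) • 1) (Bm ξ) (Bm ξ)ᴴ ((s + 1) • 1 + Cm ξ) := by
    simp only [Am, Bm_conjTranspose, ← fromBlocks_one, fromBlocks_smul, sub_eq_add_neg,
      fromBlocks_neg, fromBlocks_add, smul_zero, neg_zero, add_zero, Complex.coe_smul, ← neg_smul,
      ← add_smul]
    congr 1
    · congr 1; ring
    · rw [add_right_comm, ← add_smul]; congr 2; ring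
  rw [hblocks]
  refine posSemidef_fromBlocks_smul_one_add (by positivity) _ (Cm_posSemidef ξ) ?_
  rw [Bm_conjTranspose, Bm_mul_self, show (s - 1) * (s + 1) = ‖ξ‖ ^ 2 by linear_combination hs,
    _root_.sub_sub_cancel]
  exact Cm_posSemidef ξ

/-- For every ξ ∈ ℝ³ the matrix A(ξ) is Hermitian, every eigenvalue of A(ξ) is
real and at least |ξ|² + 1 − √(|ξ|² + 1), this lower bound is at least |ξ|²/2, and for every
t ≥ 0 the operator norm (w.r.t. the Euclidean norm of ℂ⁶) of e^{−tA(ξ)} satisfies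
‖e^{−tA(ξ)}‖ ≤ e^{−t(|ξ|²+1−√(|ξ|²+1))} ≤ e^{−t|ξ|²/2}. -/
theorem micropolar_symbol_coercive (ξ : R3) :
    (Am ξ).IsHermitian ∧
    (∀ μ ∈ spectrum ℂ (Am ξ), μ.im = 0 ∧ ‖ξ‖ ^ 2 + 1 - Real.sqrt (‖ξ‖ ^ 2 + 1) ≤ μ.re) ∧
    ‖ξ‖ ^ 2 / 2 ≤ ‖ξ‖ ^ 2 + 1 - Real.sqrt (‖ξ‖ ^ 2 + 1) ∧
    ∀ t : ℝ, 0 ≤ t →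
      ‖Matrix.toEuclideanCLM (𝕜 := ℂ) (expM t ξ)‖ ≤
          Real.exp (-t * (‖ξ‖ ^ 2 + 1 - Real.sqrt (‖ξ‖ ^ 2 + 1))) ∧
        Real.exp (-t * (‖ξ‖ ^ 2 + 1 - Real.sqrt (‖ξ‖ ^ 2 + 1))) ≤
          Real.exp (-t * ‖ξ‖ ^ 2 / 2) := by
  have hH := Am_isHermitian ξ
  have hpos := Am_sub_smul_one_posSemidef ξ
  have hhalf : ‖ξ‖ ^ 2 / 2 ≤ ‖ξ‖ ^ 2 + 1 - √(‖ξ‖ ^ 2 + 1) :=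
    half_le_add_one_sub_sqrt (by linarith [sq_nonneg ‖ξ‖])
  refine ⟨hH, fun μ hμ => ?_, hhalf, fun t ht => ⟨?_, ?_⟩⟩
  · obtain ⟨hre, him⟩ := Complex.le_def.1 (le_of_mem_spectrum_of_posSemidef_sub hpos hμ)
    rw [Complex.ofReal_re] at hre
    rw [Complex.ofReal_im] at him
    exact ⟨him.symm, hre⟩
  · exact hH.norm_toEuclideanCLM_exp_neg_smul_le (hH.le_eigenvalues_of_posSemidef_sub hpos) ht
  · exact Real.exp_le_exp.2 (by linarith [mul_le_mul_of_nonneg_left hhalf ht])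
end
end

section
/- For ξ ∈ ℝ³ define the 6×6 matrices A₁(ξ) := [[|ξ|²I₃, 0], [0, |ξ|²I₃ + C(ξ)]] and A₂(ξ) := [[0, B(ξ)], [B(ξ), 2I₃]]. Then A(ξ) = A₁(ξ) + A₂(ξ), the matrices A₁(ξ) and A₂(ξ) commute (A₁(ξ)A₂(ξ) = A₂(ξ)A₁(ξ)), and for every t ≥ 0 the matrix exponential factorizes: e^{−tA(ξ)} = e^{−tA₁(ξ)} · e^{−tA₂(ξ)}. -/
open MeasureTheory ENNReal Real Filter
open scoped RealInnerProductSpace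

noncomputable section

/-- The 6×6 matrix A₁(ξ) = [[|ξ|²I₃, 0], [0, |ξ|²I₃ + C(ξ)]]. -/
def Am1 (ξ : R3) : Matrix (Fin 3 ⊕ Fin 3) (Fin 3 ⊕ Fin 3) ℂ :=
  Matrix.fromBlocks (((‖ξ‖ ^ 2 : ℝ) : ℂ) • 1) 0 0 ((((‖ξ‖ ^ 2 : ℝ) : ℂ)) • 1 + Cm ξ)

/-- The 6×6 matrix A₂(ξ) = [[0, B(ξ)], [B(ξ), 2I₃]]. -/
def Am2 (ξ : R3) : Matrix (Fin 3 ⊕ Fin 3) (Fin 3 ⊕ Fin 3) ℂ :=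
  Matrix.fromBlocks 0 (Bm ξ) (Bm ξ) ((2 : ℂ) • 1)


lemma CB_eq_zero (ξ : R3) : Cm ξ * Bm ξ = 0 := by
  ext i j
  fin_cases i <;> fin_cases j <;>
    simp [Cm, Bm, Matrix.mul_apply, Fin.sum_univ_three, Matrix.smul_apply] <;> ring

lemma BC_eq_zero (ξ : R3) : Bm ξ * Cm ξ = 0 := by
  ext i j
  fin_cases i <;> fin_cases j <;>
    simp [Cm, Bm, Matrix.mul_apply, Fin.sum_univ_three, Matrix.smul_apply] <;> ring

lemma fromBlocks_congr {a b c d a' b' c' d' : Matrix (Fin 3) (Fin 3) ℂ}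
    (h1 : a = a') (h2 : b = b') (h3 : c = c') (h4 : d = d') :
    Matrix.fromBlocks a b c d = Matrix.fromBlocks a' b' c' d' := by
  rw [h1, h2, h3, h4]

lemma Am_split (ξ : R3) : Am ξ = Am1 ξ + Am2 ξ := by
  unfold Am Am1 Am2
  rw [Matrix.fromBlocks_add]
  refine fromBlocks_congr (by simp) (by simp) (by simp) ?_
  push_cast
  rw [add_smul]
  abel

lemma Am_commute (ξ : R3) : Am1 ξ * Am2 ξ = Am2 ξ * Am1 ξ := by
  unfold Am1 Am2
  rw [Matrix.fromBlocks_multiply, Matrix.fromBlocks_multiply]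
  have hB := CB_eq_zero ξ
  have hB' := BC_eq_zero ξ
  refine fromBlocks_congr (by simp) ?_ ?_ ?_
  · simp [Matrix.mul_smul, Matrix.smul_mul, mul_add, hB', smul_comm]
  · simp [Matrix.mul_smul, Matrix.smul_mul, add_mul, hB, smul_comm]
  · simp [Matrix.mul_smul, Matrix.smul_mul]

/-- A(ξ) = A₁(ξ) + A₂(ξ), the matrices A₁(ξ) and A₂(ξ) commute, and for every
t ≥ 0 the matrix exponential factorizes: e^{−tA(ξ)} = e^{−tA₁(ξ)}·e^{−tA₂(ξ)}. -/
theorem micropolar_symbol_splitting (ξ : R3) :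
    Am ξ = Am1 ξ + Am2 ξ ∧
    Am1 ξ * Am2 ξ = Am2 ξ * Am1 ξ ∧
    ∀ t : ℝ, 0 ≤ t →
      NormedSpace.exp ((-(t : ℂ)) • Am ξ) =
        NormedSpace.exp ((-(t : ℂ)) • Am1 ξ) * NormedSpace.exp ((-(t : ℂ)) • Am2 ξ) := by
  refine ⟨Am_split ξ, Am_commute ξ, fun t _ => ?_⟩
  have hc : Commute ((-(t : ℂ)) • Am1 ξ) ((-(t : ℂ)) • Am2 ξ) :=
    (Commute.smul_right (Commute.smul_left (Am_commute ξ) _) _)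
  rw [Am_split ξ, smul_add]
  exact Matrix.exp_add_of_commute _ _ hc
end
end

section
/- (Lemma 2.3, Fourier-side form.) Let r ∈ [1,∞], T ∈ (0,∞] and α ∈ (0,1). There exists a constant C = C(α) > 0, depending only on α, such that for every measurable F : ℝ³ → ℂ⁶ with N^{−1}_r(F) < ∞, the function G(t,ξ) := e^{−tA(ξ)}F(ξ) satisfies N^{α}_{r, 2/(1+α), T}(G) ≤ C · N^{−1}_r(F) and N^{−α}_{r, 2/(1−α), T}(G) ≤ C · N^{−1}_r(F). -/
open MeasureTheory ENNReal Real Filter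
open scoped RealInnerProductSpace

noncomputable section

/-- ℓ^r norm over ℤ of an ℝ≥0∞-valued sequence, r ∈ [1,∞] (sup when r = ∞). -/
def lnorm (r : ℝ≥0∞) (g : ℤ → ℝ≥0∞) : ℝ≥0∞ :=
  if r = ∞ then ⨆ j, g j else (∑' j, g j ^ r.toReal) ^ (1 / r.toReal)

/-- The time interval (0,T) ⊆ ℝ, for T ∈ (0,∞]. -/
def timeSet (T : ℝ≥0∞) : Set ℝ := {t : ℝ | 0 < t ∧ ENNReal.ofReal t < T}

/-- L^λ(0,T) norm of an ℝ≥0∞-valued function of time, λ ∈ [1,∞]. -/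
def tnorm (lam T : ℝ≥0∞) (h : ℝ → ℝ≥0∞) : ℝ≥0∞ :=
  if lam = ∞ then essSup h (volume.restrict (timeSet T))
  else (∫⁻ t in timeSet T, h t ^ lam.toReal) ^ (1 / lam.toReal)

/-- Littlewood–Paley piece ψ_j(ξ) := ψ(2^{−j}ξ). -/
def psij (ψ : R3 → ℝ) (j : ℤ) (ξ : R3) : ℝ := ψ ((2 : ℝ) ^ (-j) • ξ)

/-- The standing assumptions on the Littlewood–Paley function ψ: nonnegative, smooth,
supported in the annulus {3/4 ≤ |ξ| ≤ 8/3}, with ∑_{j∈ℤ} ψ(2^{−j}ξ) = 1 for ξ ≠ 0. -/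
structure IsLP (ψ : R3 → ℝ) : Prop where
  smooth : ContDiff ℝ (⊤ : ℕ∞) ψ
  nonneg : ∀ ξ, 0 ≤ ψ ξ
  support : ∀ ξ, ψ ξ ≠ 0 → 3 / 4 ≤ ‖ξ‖ ∧ ‖ξ‖ ≤ 8 / 3
  sum_eq_one : ∀ ξ : R3, ξ ≠ 0 → HasSum (fun j : ℤ => psij ψ j ξ) 1

/-- Fourier-side Besov norm N^s_r(F) = ‖ (2^{js} ‖ψ_j F‖_{L¹})_j ‖_{ℓ^r(ℤ)}. -/
def fbNorm {V : Type*} [NormedAddCommGroup V] [NormedSpace ℝ V]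
    (ψ : R3 → ℝ) (s : ℝ) (r : ℝ≥0∞) (F : R3 → V) : ℝ≥0∞ :=
  lnorm r fun j => (2 : ℝ≥0∞) ^ ((j : ℝ) * s) * ∫⁻ ξ, (‖psij ψ j ξ • F ξ‖₊ : ℝ≥0∞)

/-- Fourier-side Chemin–Lerner norm
N^s_{r,λ,T}(F) = ‖ (2^{js} ‖ t ↦ ‖ψ_j F(t,·)‖_{L¹} ‖_{L^λ(0,T)})_j ‖_{ℓ^r(ℤ)}. -/
def clNorm {V : Type*} [NormedAddCommGroup V] [NormedSpace ℝ V]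
    (ψ : R3 → ℝ) (s : ℝ) (r lam T : ℝ≥0∞) (F : ℝ → R3 → V) : ℝ≥0∞ :=
  lnorm r fun j => (2 : ℝ≥0∞) ^ ((j : ℝ) * s) *
    tnorm lam T fun t => ∫⁻ ξ, (‖psij ψ j ξ • F t ξ‖₊ : ℝ≥0∞)

def En (v : C6) : ℝ := ∑ i, Complex.normSq (v i)
def Qf (ξ : R3) (v : C6) : ℝ := ∑ i, ((Am ξ).mulVec v i * (starRingEnd ℂ) (v i)).re

lemma normsq_xi (ξ : R3) : ‖ξ‖ ^ 2 = ξ 0 ^ 2 + ξ 1 ^ 2 + ξ 2 ^ 2 := by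
  rw [EuclideanSpace.norm_eq, Real.sq_sqrt (by positivity)]
  simp [Fin.sum_univ_three, sq_abs]

lemma qf_expand (ξ : R3) (v : C6) :
    Qf ξ v * (ξ 0 ^ 2 + ξ 1 ^ 2 + ξ 2 ^ 2)
      - (ξ 0 ^ 2 + ξ 1 ^ 2 + ξ 2 ^ 2) / 2 * En v * (ξ 0 ^ 2 + ξ 1 ^ 2 + ξ 2 ^ 2)
    = (1/2) * (((ξ 0 ^ 2 + ξ 1 ^ 2 + ξ 2 ^ 2) * (v (.inl 0)).re
          - 2 * (ξ 2 * (v (.inr 1)).im - ξ 1 * (v (.inr 2)).im)) ^ 2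
        + ((ξ 0 ^ 2 + ξ 1 ^ 2 + ξ 2 ^ 2) * (v (.inl 0)).im
          + 2 * (ξ 2 * (v (.inr 1)).re - ξ 1 * (v (.inr 2)).re)) ^ 2
        + ((ξ 0 ^ 2 + ξ 1 ^ 2 + ξ 2 ^ 2) * (v (.inl 1)).re
          - 2 * (-(ξ 2 * (v (.inr 0)).im) + ξ 0 * (v (.inr 2)).im)) ^ 2
        + ((ξ 0 ^ 2 + ξ 1 ^ 2 + ξ 2 ^ 2) * (v (.inl 1)).im
          + 2 * (-(ξ 2 * (v (.inr 0)).re) + ξ 0 * (v (.inr 2)).re)) ^ 2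
        + ((ξ 0 ^ 2 + ξ 1 ^ 2 + ξ 2 ^ 2) * (v (.inl 2)).re
          - 2 * (ξ 1 * (v (.inr 0)).im - ξ 0 * (v (.inr 1)).im)) ^ 2
        + ((ξ 0 ^ 2 + ξ 1 ^ 2 + ξ 2 ^ 2) * (v (.inl 2)).im
          + 2 * (ξ 1 * (v (.inr 0)).re - ξ 0 * (v (.inr 1)).re)) ^ 2)
      + (ξ 0 ^ 2 + ξ 1 ^ 2 + ξ 2 ^ 2) ^ 2 / 2 *
          ((v (.inr 0)).re ^ 2 + (v (.inr 0)).im ^ 2 + (v (.inr 1)).re ^ 2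
            + (v (.inr 1)).im ^ 2 + (v (.inr 2)).re ^ 2 + (v (.inr 2)).im ^ 2)
      + ((ξ 0 ^ 2 + ξ 1 ^ 2 + ξ 2 ^ 2) + 2) *
          ((ξ 0 * (v (.inr 0)).re + ξ 1 * (v (.inr 1)).re + ξ 2 * (v (.inr 2)).re) ^ 2
            + (ξ 0 * (v (.inr 0)).im + ξ 1 * (v (.inr 1)).im + ξ 2 * (v (.inr 2)).im) ^ 2) := by
  have hn : ((‖ξ‖ ^ 2 : ℝ) : ℂ) = ((ξ 0 ^ 2 + ξ 1 ^ 2 + ξ 2 ^ 2 : ℝ) : ℂ) := by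
    rw [normsq_xi]
  have e10 : (Am ξ).mulVec v (Sum.inl 0)
      = ((ξ 0 ^ 2 + ξ 1 ^ 2 + ξ 2 ^ 2 : ℝ) : ℂ) * v (.inl 0)
        + Complex.I * ((ξ 2 : ℂ) * v (.inr 1) - (ξ 1 : ℂ) * v (.inr 2)) := by
    simp [Am, Bm, hn, Matrix.mulVec, dotProduct, Fintype.sum_sum_type,
      Fin.sum_univ_three, Matrix.one_apply, smul_eq_mul]
    ring
  have e11 : (Am ξ).mulVec v (Sum.inl 1)
      = ((ξ 0 ^ 2 + ξ 1 ^ 2 + ξ 2 ^ 2 : ℝ) : ℂ) * v (.inl 1)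
        + Complex.I * (-((ξ 2 : ℂ) * v (.inr 0)) + (ξ 0 : ℂ) * v (.inr 2)) := by
    simp [Am, Bm, hn, Matrix.mulVec, dotProduct, Fintype.sum_sum_type,
      Fin.sum_univ_three, Matrix.one_apply, smul_eq_mul]
    ring
  have e12 : (Am ξ).mulVec v (Sum.inl 2)
      = ((ξ 0 ^ 2 + ξ 1 ^ 2 + ξ 2 ^ 2 : ℝ) : ℂ) * v (.inl 2)
        + Complex.I * ((ξ 1 : ℂ) * v (.inr 0) - (ξ 0 : ℂ) * v (.inr 1)) := by
    simp [Am, Bm, hn, Matrix.mulVec, dotProduct, Fintype.sum_sum_type,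
      Fin.sum_univ_three, Matrix.one_apply, smul_eq_mul]
    ring
  have e20 : (Am ξ).mulVec v (Sum.inr 0)
      = Complex.I * ((ξ 2 : ℂ) * v (.inl 1) - (ξ 1 : ℂ) * v (.inl 2))
        + (((ξ 0 ^ 2 + ξ 1 ^ 2 + ξ 2 ^ 2 + 2 : ℝ) : ℂ) * v (.inr 0)
          + (ξ 0 : ℂ) * ((ξ 0 : ℂ) * v (.inr 0) + (ξ 1 : ℂ) * v (.inr 1) + (ξ 2 : ℂ) * v (.inr 2))) := by
    simp [Am, Bm, Cm, hn, Matrix.mulVec, dotProduct, Fintype.sum_sum_type,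
      Fin.sum_univ_three, Matrix.one_apply, smul_eq_mul, normsq_xi, Complex.ofReal_add,
      Complex.ofReal_pow]
    ring
  have e21 : (Am ξ).mulVec v (Sum.inr 1)
      = Complex.I * (-((ξ 2 : ℂ) * v (.inl 0)) + (ξ 0 : ℂ) * v (.inl 2))
        + (((ξ 0 ^ 2 + ξ 1 ^ 2 + ξ 2 ^ 2 + 2 : ℝ) : ℂ) * v (.inr 1)
          + (ξ 1 : ℂ) * ((ξ 0 : ℂ) * v (.inr 0) + (ξ 1 : ℂ) * v (.inr 1) + (ξ 2 : ℂ) * v (.inr 2))) := by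
    simp [Am, Bm, Cm, hn, Matrix.mulVec, dotProduct, Fintype.sum_sum_type,
      Fin.sum_univ_three, Matrix.one_apply, smul_eq_mul, normsq_xi, Complex.ofReal_add,
      Complex.ofReal_pow]
    ring
  have e22 : (Am ξ).mulVec v (Sum.inr 2)
      = Complex.I * ((ξ 1 : ℂ) * v (.inl 0) - (ξ 0 : ℂ) * v (.inl 1))
        + (((ξ 0 ^ 2 + ξ 1 ^ 2 + ξ 2 ^ 2 + 2 : ℝ) : ℂ) * v (.inr 2)
          + (ξ 2 : ℂ) * ((ξ 0 : ℂ) * v (.inr 0) + (ξ 1 : ℂ) * v (.inr 1) + (ξ 2 : ℂ) * v (.inr 2))) := by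
    simp [Am, Bm, Cm, hn, Matrix.mulVec, dotProduct, Fintype.sum_sum_type,
      Fin.sum_univ_three, Matrix.one_apply, smul_eq_mul, normsq_xi, Complex.ofReal_add,
      Complex.ofReal_pow]
    ring
  unfold Qf En
  rw [Fintype.sum_sum_type, Fintype.sum_sum_type]
  simp only [Fin.sum_univ_three, e10, e11, e12, e20, e21, e22, Fin.isValue]
  simp only [Complex.normSq_apply, Complex.add_re, Complex.add_im, Complex.mul_re,
    Complex.mul_im, Complex.I_re, Complex.I_im, Complex.ofReal_re, Complex.ofReal_im,
    Complex.conj_re, Complex.conj_im, Complex.sub_re, Complex.sub_im, Complex.neg_re,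
    Complex.neg_im]
  ring

lemma qf_zero (v : C6) : Qf (0 : R3) v = 2 * ∑ i : Fin 3, Complex.normSq (v (.inr i)) := by
  have h0 : ∀ i : Fin 3, ((0 : R3) i : ℂ) = 0 := fun i => by
    rw [show (0 : R3) i = 0 from rfl]
    norm_num
  unfold Qf Am Bm Cm
  rw [Fintype.sum_sum_type]
  simp [Matrix.mulVec, dotProduct, Fintype.sum_sum_type, Fin.sum_univ_three,
    Matrix.one_apply, h0, Complex.normSq_apply, Complex.mul_re, Complex.add_re, Complex.add_im,
    Complex.mul_im, Finset.mul_sum, Finset.sum_ite_eq, smul_eq_mul, norm_zero]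
  ring

lemma qf_lower (ξ : R3) (v : C6) : ‖ξ‖ ^ 2 / 2 * En v ≤ Qf ξ v := by
  rcases eq_or_ne ξ 0 with h0 | h0
  · subst h0
    rw [norm_zero, qf_zero]
    have h1 : (0:ℝ) ^ 2 / 2 * En v = 0 := by ring
    rw [h1]
    have := Finset.sum_nonneg (fun i (_ : i ∈ Finset.univ) => Complex.normSq_nonneg (v (.inr i)))
    positivity
  · have hs : 0 < ξ 0 ^ 2 + ξ 1 ^ 2 + ξ 2 ^ 2 := by
      rw [← normsq_xi]
      have : ‖ξ‖ ≠ 0 := norm_ne_zero_iff.mpr h0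
      positivity
    rw [normsq_xi]
    have key := qf_expand ξ v
    have hpos : 0 ≤ Qf ξ v * (ξ 0 ^ 2 + ξ 1 ^ 2 + ξ 2 ^ 2)
        - (ξ 0 ^ 2 + ξ 1 ^ 2 + ξ 2 ^ 2) / 2 * En v * (ξ 0 ^ 2 + ξ 1 ^ 2 + ξ 2 ^ 2) := by
      rw [key]; positivity
    have h2 : (ξ 0 ^ 2 + ξ 1 ^ 2 + ξ 2 ^ 2) / 2 * En v * (ξ 0 ^ 2 + ξ 1 ^ 2 + ξ 2 ^ 2)
        ≤ Qf ξ v * (ξ 0 ^ 2 + ξ 1 ^ 2 + ξ 2 ^ 2) := by linarith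
    exact le_of_mul_le_mul_right h2 hs

lemma en_decay (ξ : R3) (x : C6) {t : ℝ} (ht : 0 ≤ t) :
    En ((expM t ξ).mulVec x) ≤ Real.exp (-(‖ξ‖ ^ 2 * t)) * En x := by
  letI : SeminormedRing (Matrix (Fin 3 ⊕ Fin 3) (Fin 3 ⊕ Fin 3) ℂ) := Matrix.linftyOpSemiNormedRing
  letI : NormedRing (Matrix (Fin 3 ⊕ Fin 3) (Fin 3 ⊕ Fin 3) ℂ) := Matrix.linftyOpNormedRing
  letI : NormedAlgebra ℝ (Matrix (Fin 3 ⊕ Fin 3) (Fin 3 ⊕ Fin 3) ℂ) := Matrix.linftyOpNormedAlgebra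
  set N : Matrix (Fin 3 ⊕ Fin 3) (Fin 3 ⊕ Fin 3) ℂ := -(Am ξ) with hN
  have hexp : ∀ s : ℝ, expM s ξ = NormedSpace.exp (s • N) := by
    intro s
    unfold expM
    congr 1
    rw [hN, smul_neg, ← neg_smul, ← Complex.coe_smul]
    norm_num
  -- the solution curve
  set y : ℝ → C6 := fun s => (NormedSpace.exp (s • N)).mulVec x with hy
  -- mulVec as a continuous linear map
  let Ll : Matrix (Fin 3 ⊕ Fin 3) (Fin 3 ⊕ Fin 3) ℂ →ₗ[ℝ] C6 :=
    { toFun := fun M => M.mulVec x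
      map_add' := fun M M' => Matrix.add_mulVec M M' x
      map_smul' := fun c M => Matrix.smul_mulVec c M x }
  let L : Matrix (Fin 3 ⊕ Fin 3) (Fin 3 ⊕ Fin 3) ℂ →L[ℝ] C6 := LinearMap.toContinuousLinearMap Ll
  have hyderiv : ∀ s : ℝ, ∀ i, HasDerivAt (fun u => y u i)
      (N.mulVec (y s) i) s := by
    intro s i
    have h1 : HasDerivAt (fun u : ℝ => NormedSpace.exp (u • N)) (N * NormedSpace.exp (s • N)) s :=
      hasDerivAt_exp_smul_const' N s
    have h2 : HasDerivAt (fun u : ℝ => L (NormedSpace.exp (u • N)))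
        (L (N * NormedSpace.exp (s • N))) s := (L.hasFDerivAt.comp_hasDerivAt s h1)
    have h3 := ((ContinuousLinearMap.proj (R := ℂ) (φ := fun _ : Fin 3 ⊕ Fin 3 => ℂ) i).restrictScalars ℝ).hasFDerivAt.comp_hasDerivAt s h2
    convert h3 using 1
    show N.mulVec (y s) i = ((N * NormedSpace.exp (s • N)).mulVec x) i
    rw [← Matrix.mulVec_mulVec]
    all_goals rfl
  -- energy function and its derivative
  set f : ℝ → ℝ := fun s => En (y s) with hf
  have hfderiv : ∀ s : ℝ, HasDerivAt f (-2 * Qf ξ (y s)) s := by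
    intro s
    have hsum : HasDerivAt (fun u => ∑ i, Complex.normSq (y u i))
        (∑ i, (2 * ((y s i).re * (N.mulVec (y s) i).re + (y s i).im * (N.mulVec (y s) i).im))) s := by
      refine HasDerivAt.fun_sum fun i _ => ?_
      have hz := hyderiv s i
      have hre : HasDerivAt (fun u => (y u i).re) ((N.mulVec (y s) i).re) s :=
        (Complex.reCLM.restrictScalars ℝ).hasFDerivAt.comp_hasDerivAt s hz
      have him : HasDerivAt (fun u => (y u i).im) ((N.mulVec (y s) i).im) s :=
        (Complex.imCLM.restrictScalars ℝ).hasFDerivAt.comp_hasDerivAt s hz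
      have := (hre.mul hre).add (him.mul him)
      have h2 : HasDerivAt (fun u => (y u i).re * (y u i).re + (y u i).im * (y u i).im)
          (2 * ((y s i).re * (N.mulVec (y s) i).re + (y s i).im * (N.mulVec (y s) i).im)) s := by
        convert this using 1
        case e'_9 => ring
        all_goals rfl
      refine h2.congr_of_eventuallyEq ?_
      filter_upwards with u
      rw [Complex.normSq_apply]
    have heq : (∑ i, (2 * ((y s i).re * (N.mulVec (y s) i).re + (y s i).im * (N.mulVec (y s) i).im)))
        = -2 * Qf ξ (y s) := by
      rw [Qf, Finset.mul_sum]
      refine Finset.sum_congr rfl fun i _ => ?_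
      rw [hN, Matrix.neg_mulVec]
      simp only [Pi.neg_apply, Complex.neg_re, Complex.neg_im, Complex.mul_re,
        Complex.conj_re, Complex.conj_im]
      ring
    rw [← heq]
    simp only [hf, En]
    exact hsum
  -- the auxiliary function g
  set c : ℝ := ‖ξ‖ ^ 2 with hc
  have hc0 : 0 ≤ c := by positivity
  set g : ℝ → ℝ := fun s => Real.exp (c * s) * f s with hg
  have hgderiv : ∀ s : ℝ, HasDerivAt g (c * Real.exp (c * s) * f s + Real.exp (c * s) * (-2 * Qf ξ (y s))) s := by
    intro s
    have h1 : HasDerivAt (fun u : ℝ => Real.exp (c * u)) (c * Real.exp (c * s)) s := by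
      have h2 := ((hasDerivAt_id s).const_mul c).exp
      simpa [mul_comm] using h2
    show HasDerivAt (fun s => Real.exp (c * s) * f s) _ s
    exact h1.mul (hfderiv s)
  have hganti : Antitone g := by
    refine antitone_of_deriv_nonpos (fun s => (hgderiv s).differentiableAt) fun s => ?_
    rw [(hgderiv s).deriv]
    have hqf := qf_lower ξ (y s)
    have hfnn : 0 ≤ f s := Finset.sum_nonneg fun i _ => Complex.normSq_nonneg _
    have : c / 2 * f s ≤ Qf ξ (y s) := by rw [hc]; exact hqf
    nlinarith [Real.exp_pos (c * s)]
  have hg0 : g t ≤ g 0 := hganti ht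
  have hf0 : f 0 = En x := by
    simp only [hf, hy]
    rw [zero_smul, NormedSpace.exp_zero, Matrix.one_mulVec]
  have hft : f t = En ((expM t ξ).mulVec x) := by simp only [hf, hy, hexp t]
  rw [← hft]
  have : Real.exp (c * t) * f t ≤ En x := by
    simpa [hg, hf0] using hg0
  have hexppos : 0 < Real.exp (c * t) := Real.exp_pos _
  calc f t = Real.exp (-(c * t)) * (Real.exp (c * t) * f t) := by
        rw [← mul_assoc, ← Real.exp_add]; simp
    _ ≤ Real.exp (-(c * t)) * En x := by
        exact mul_le_mul_of_nonneg_left this (le_of_lt (Real.exp_pos _))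

lemma measurable_timeSet (T : ℝ≥0∞) : MeasurableSet (timeSet T) := by
  have : timeSet T = Set.Ioi 0 ∩ (fun t : ℝ => ENNReal.ofReal t) ⁻¹' (Set.Iio T) := rfl
  rw [this]
  exact measurableSet_Ioi.inter (ENNReal.measurable_ofReal measurableSet_Iio)

lemma timeSet_subset_Ioi (T : ℝ≥0∞) : timeSet T ⊆ Set.Ioi 0 := fun t ht => ht.1

lemma lintegral_exp_decay {β : ℝ} (hβ : 0 < β) :
    (∫⁻ t in Set.Ioi (0:ℝ), ENNReal.ofReal (Real.exp (-(β * t)))) = ENNReal.ofReal β⁻¹ := by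
  have hsh : ∀ t : ℝ, -(β * t) = -β * t := fun t => by ring
  simp only [hsh]
  rw [← ofReal_integral_eq_lintegral_ofReal (exp_neg_integrableOn_Ioi 0 hβ)
    (ae_of_all _ fun t => (Real.exp_pos _).le)]
  congr 1
  have h2 := integral_comp_mul_left_Ioi (fun u => Real.exp (-u)) 0 hβ
  simp only [mul_zero, hsh] at h2
  rw [h2, integral_exp_neg_Ioi]
  simp

lemma lnorm_mono {r : ℝ≥0∞} {g g' : ℤ → ℝ≥0∞} (h : ∀ j, g j ≤ g' j) : lnorm r g ≤ lnorm r g' := by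
  unfold lnorm
  split
  · exact iSup_mono h
  · refine ENNReal.rpow_le_rpow (ENNReal.tsum_le_tsum fun j => ?_) (by positivity)
    exact ENNReal.rpow_le_rpow (h j) ENNReal.toReal_nonneg

lemma lnorm_const_mul {r : ℝ≥0∞} (hr : 1 ≤ r) (c : ℝ≥0∞) (g : ℤ → ℝ≥0∞) :
    lnorm r (fun j => c * g j) = c * lnorm r g := by
  unfold lnorm
  split
  · exact (ENNReal.mul_iSup c g).symm
  · rename_i hne
    have hp : 0 < r.toReal := ENNReal.toReal_pos (by intro h; rw [h] at hr; simp at hr) hne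
    have h1 : ∀ j, (c * g j) ^ r.toReal = c ^ r.toReal * g j ^ r.toReal := fun j =>
      ENNReal.mul_rpow_of_nonneg _ _ hp.le
    simp only [h1]
    rw [ENNReal.tsum_mul_left, ENNReal.mul_rpow_of_nonneg _ _ (by positivity : (0:ℝ) ≤ 1 / r.toReal),
      ← ENNReal.rpow_mul, mul_one_div_cancel hp.ne', ENNReal.rpow_one]

lemma tnorm_le (T : ℝ≥0∞) {lamr : ℝ} (hl : 1 ≤ lamr) {b : ℝ} (hb : 0 < b) (K : ℝ≥0∞)
    (h : ℝ → ℝ≥0∞)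
    (hh : ∀ t, 0 < t → h t ≤ ENNReal.ofReal (Real.sqrt 6 * Real.exp (-(b * t))) * K) :
    tnorm (ENNReal.ofReal lamr) T h
      ≤ ENNReal.ofReal (Real.sqrt 6 * (1 / b) ^ (1 / lamr)) * K := by
  have hlam0 : 0 < lamr := lt_of_lt_of_le one_pos hl
  have hne : ENNReal.ofReal lamr ≠ ∞ := ofReal_ne_top
  rw [tnorm, if_neg hne, ENNReal.toReal_ofReal hlam0.le]
  have step1 : (∫⁻ t in timeSet T, h t ^ lamr)
      ≤ ∫⁻ t in Set.Ioi (0:ℝ), (ENNReal.ofReal (Real.sqrt 6 * Real.exp (-(b * t))) * K) ^ lamr := by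
    refine le_trans ?_ (lintegral_mono_set (timeSet_subset_Ioi T))
    refine lintegral_mono_ae ((ae_restrict_iff' (measurable_timeSet T)).2
      (ae_of_all _ fun t ht => ?_))
    exact ENNReal.rpow_le_rpow (hh t ht.1) hlam0.le
  have hptwise : ∀ t : ℝ, (ENNReal.ofReal (Real.sqrt 6 * Real.exp (-(b * t))) * K) ^ lamr
      = ENNReal.ofReal (Real.sqrt 6 ^ lamr) * ENNReal.ofReal (Real.exp (-(lamr * b * t))) * K ^ lamr := by
    intro t
    rw [ENNReal.mul_rpow_of_nonneg _ _ hlam0.le,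
      ENNReal.ofReal_rpow_of_pos (by positivity),
      Real.mul_rpow (Real.sqrt_nonneg 6) (Real.exp_pos _).le, ← Real.exp_mul,
      ENNReal.ofReal_mul (by positivity)]
    ring_nf
  have step2 : (∫⁻ t in Set.Ioi (0:ℝ), (ENNReal.ofReal (Real.sqrt 6 * Real.exp (-(b * t))) * K) ^ lamr)
      = ENNReal.ofReal (Real.sqrt 6 ^ lamr) * ENNReal.ofReal (lamr * b)⁻¹ * K ^ lamr := by
    simp only [hptwise]
    have hmeas : Measurable (fun t : ℝ =>
        ENNReal.ofReal (Real.sqrt 6 ^ lamr) * ENNReal.ofReal (Real.exp (-(lamr * b * t)))) := by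
      fun_prop
    rw [lintegral_mul_const'' (K ^ lamr) hmeas.aemeasurable,
      lintegral_const_mul' _ _ ofReal_ne_top]
    congr 2
    exact lintegral_exp_decay (by positivity)
  calc (∫⁻ t in timeSet T, h t ^ lamr) ^ (1/lamr)
      ≤ (ENNReal.ofReal (Real.sqrt 6 ^ lamr) * ENNReal.ofReal (lamr * b)⁻¹ * K ^ lamr) ^ (1/lamr) := by
        exact ENNReal.rpow_le_rpow (step2 ▸ step1) (by positivity)
    _ = (ENNReal.ofReal (Real.sqrt 6 ^ lamr)) ^ (1/lamr) * (ENNReal.ofReal (lamr * b)⁻¹) ^ (1/lamr)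
          * K := by
        rw [ENNReal.mul_rpow_of_nonneg _ _ (by positivity : (0:ℝ) ≤ 1/lamr),
          ENNReal.mul_rpow_of_nonneg _ _ (by positivity : (0:ℝ) ≤ 1/lamr),
          ← ENNReal.rpow_mul K, mul_one_div_cancel hlam0.ne', ENNReal.rpow_one]
    _ ≤ ENNReal.ofReal (Real.sqrt 6 * (1 / b) ^ (1 / lamr)) * K := by
        refine mul_le_mul_left ?_ K
        rw [ENNReal.ofReal_rpow_of_pos (by positivity), ENNReal.ofReal_rpow_of_pos (by positivity),
          ← Real.rpow_mul (Real.sqrt_nonneg 6), mul_one_div_cancel hlam0.ne', Real.rpow_one,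
          ← ENNReal.ofReal_mul (Real.sqrt_nonneg 6)]
        refine ENNReal.ofReal_le_ofReal (mul_le_mul_of_nonneg_left ?_ (Real.sqrt_nonneg 6))
        refine Real.rpow_le_rpow (by positivity) ?_ (by positivity)
        rw [one_div, inv_le_inv₀ (by positivity) hb]
        nlinarith


lemma sqrt_exp_half (z : ℝ) : Real.sqrt (Real.exp z) = Real.exp (z / 2) := by
  rw [show Real.exp z = Real.exp (z / 2) ^ 2 from by rw [sq, ← Real.exp_add, add_halves],
    Real.sqrt_sq (Real.exp_pos _).le]

lemma norm_expM_mulVec_le (ξ : R3) (x : C6) {t : ℝ} (ht : 0 ≤ t) :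
    ‖(expM t ξ).mulVec x‖ ≤ Real.sqrt 6 * Real.exp (-(‖ξ‖ ^ 2 * t) / 2) * ‖x‖ := by
  set y : C6 := (expM t ξ).mulVec x with hy
  have hEy : 0 ≤ En y := Finset.sum_nonneg fun i _ => Complex.normSq_nonneg _
  have h1 : ‖y‖ ≤ Real.sqrt (En y) := by
    rw [pi_norm_le_iff_of_nonneg (Real.sqrt_nonneg _)]
    intro i
    have : ‖y i‖ = Real.sqrt (Complex.normSq (y i)) := by
      rw [Complex.norm_def]
    rw [this]
    refine Real.sqrt_le_sqrt ?_
    exact Finset.single_le_sum (f := fun i => Complex.normSq (y i))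
      (fun i _ => Complex.normSq_nonneg _) (Finset.mem_univ i)
  have h2 : En x ≤ 6 * ‖x‖ ^ 2 := by
    have : ∀ i, Complex.normSq (x i) ≤ ‖x‖ ^ 2 := by
      intro i
      rw [← Complex.sq_norm]
      exact pow_le_pow_left₀ (norm_nonneg _) (norm_le_pi_norm x i) 2
    calc En x ≤ ∑ _i : Fin 3 ⊕ Fin 3, ‖x‖ ^ 2 :=
          Finset.sum_le_sum fun i _ => this i
      _ = 6 * ‖x‖ ^ 2 := by
          simp [Finset.sum_const, Finset.card_univ]
          try ring
  have h3 := en_decay ξ x ht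
  have hsqrt_exp : Real.sqrt (Real.exp (-(‖ξ‖ ^ 2 * t))) = Real.exp (-(‖ξ‖ ^ 2 * t) / 2) :=
    sqrt_exp_half _
  calc ‖y‖ ≤ Real.sqrt (En y) := h1
    _ ≤ Real.sqrt (Real.exp (-(‖ξ‖ ^ 2 * t)) * (6 * ‖x‖ ^ 2)) := by
        refine Real.sqrt_le_sqrt ?_
        calc En y ≤ Real.exp (-(‖ξ‖ ^ 2 * t)) * En x := h3
          _ ≤ Real.exp (-(‖ξ‖ ^ 2 * t)) * (6 * ‖x‖ ^ 2) :=
              mul_le_mul_of_nonneg_left h2 (Real.exp_pos _).le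
    _ = Real.sqrt 6 * Real.exp (-(‖ξ‖ ^ 2 * t) / 2) * ‖x‖ := by
        rw [Real.sqrt_mul (Real.exp_pos _).le, Real.sqrt_mul (by norm_num : (0:ℝ) ≤ 6),
          hsqrt_exp, Real.sqrt_sq (norm_nonneg x)]
        ring

/-- The decay rate for the `j`-th block. -/
def bj (j : ℤ) : ℝ := 9 / 32 * (2 : ℝ) ^ (2 * (j : ℝ))

lemma bj_pos (j : ℤ) : 0 < bj j := by
  unfold bj
  positivity

lemma support_norm_lb {ψ : R3 → ℝ} (hψ : IsLP ψ) {j : ℤ} {ξ : R3} (h : psij ψ j ξ ≠ 0) :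
    3 / 4 * (2 : ℝ) ^ ((j : ℝ)) ≤ ‖ξ‖ := by
  have hsupp := (hψ.support _ h).1
  rw [norm_smul] at hsupp
  have h2 : ‖(2 : ℝ) ^ (-j)‖ = (2 : ℝ) ^ (-(j : ℝ)) := by
    rw [Real.norm_eq_abs, abs_of_pos (zpow_pos (show (0:ℝ) < 2 by norm_num) (-j)),
      ← Real.rpow_intCast 2 (-j), Int.cast_neg]
  rw [h2] at hsupp
  have hpow : (0:ℝ) < (2 : ℝ) ^ ((j : ℝ)) := Real.rpow_pos_of_pos (by norm_num) _
  have := mul_le_mul_of_nonneg_left hsupp hpow.le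
  calc 3 / 4 * (2 : ℝ) ^ ((j : ℝ)) = (2 : ℝ) ^ ((j : ℝ)) * (3/4) := by ring
    _ ≤ (2 : ℝ) ^ ((j : ℝ)) * ((2 : ℝ) ^ (-(j : ℝ)) * ‖ξ‖) := this
    _ = ‖ξ‖ := by
        rw [← mul_assoc, ← Real.rpow_add (by norm_num : (0:ℝ) < 2)]
        simp

lemma exp_decay_on_support {ψ : R3 → ℝ} (hψ : IsLP ψ) {j : ℤ} {ξ : R3} (h : psij ψ j ξ ≠ 0)
    {t : ℝ} (ht : 0 ≤ t) :
    Real.exp (-(‖ξ‖ ^ 2 * t) / 2) ≤ Real.exp (-(bj j * t)) := by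
  refine Real.exp_le_exp.2 ?_
  have hlb := support_norm_lb hψ h
  have hsq : (3 / 4 * (2 : ℝ) ^ ((j : ℝ))) ^ 2 ≤ ‖ξ‖ ^ 2 := by
    refine pow_le_pow_left₀ (by positivity) hlb 2
  have hval : (3 / 4 * (2 : ℝ) ^ ((j : ℝ))) ^ 2 = 9 / 16 * (2 : ℝ) ^ (2 * (j : ℝ)) := by
    rw [mul_pow, ← Real.rpow_natCast ((2:ℝ) ^ ((j:ℝ))) 2, ← Real.rpow_mul (by norm_num : (0:ℝ) ≤ 2)]
    norm_num
    ring_nf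
  rw [hval] at hsq
  unfold bj
  nlinarith [Real.rpow_pos_of_pos (show (0:ℝ) < 2 by norm_num) (2 * (j:ℝ))]

lemma integrand_bound {ψ : R3 → ℝ} (hψ : IsLP ψ) (F : R3 → C6) (j : ℤ) {t : ℝ} (ht : 0 < t) :
    (∫⁻ ξ, (‖psij ψ j ξ • (expM t ξ).mulVec (F ξ)‖₊ : ℝ≥0∞))
      ≤ ENNReal.ofReal (Real.sqrt 6 * Real.exp (-(bj j * t)))
        * ∫⁻ ξ, (‖psij ψ j ξ • F ξ‖₊ : ℝ≥0∞) := by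
  rw [← lintegral_const_mul' _ _ ofReal_ne_top]
  refine lintegral_mono fun ξ => ?_
  rcases eq_or_ne (psij ψ j ξ) 0 with h0 | h0
  · simp [h0]
  · rw [← enorm_eq_nnnorm, ← enorm_eq_nnnorm, ← ofReal_norm, ← ofReal_norm,
      ← ENNReal.ofReal_mul (by positivity)]
    refine ENNReal.ofReal_le_ofReal ?_
    rw [norm_smul, norm_smul]
    have hG := norm_expM_mulVec_le ξ (F ξ) ht.le
    have hE := exp_decay_on_support hψ h0 ht.le
    have hψ0 : (0:ℝ) ≤ ‖psij ψ j ξ‖ := norm_nonneg _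
    calc ‖psij ψ j ξ‖ * ‖(expM t ξ).mulVec (F ξ)‖
        ≤ ‖psij ψ j ξ‖ * (Real.sqrt 6 * Real.exp (-(‖ξ‖ ^ 2 * t) / 2) * ‖F ξ‖) :=
          mul_le_mul_of_nonneg_left hG hψ0
      _ ≤ ‖psij ψ j ξ‖ * (Real.sqrt 6 * Real.exp (-(bj j * t)) * ‖F ξ‖) := by
          refine mul_le_mul_of_nonneg_left ?_ hψ0
          refine mul_le_mul_of_nonneg_right (mul_le_mul_of_nonneg_left hE (Real.sqrt_nonneg 6))
            (norm_nonneg _)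
      _ = Real.sqrt 6 * Real.exp (-(bj j * t)) * (‖psij ψ j ξ‖ * ‖F ξ‖) := by ring

lemma main_case (ψ : R3 → ℝ) (hψ : IsLP ψ) (r : ℝ≥0∞) (hr : 1 ≤ r) (T : ℝ≥0∞) (F : R3 → C6)
    {s lamr : ℝ} (hl : 1 ≤ lamr) (hrel : s - 2 / lamr = -1) :
    clNorm ψ s r (ENNReal.ofReal lamr) T (fun t ξ => (expM t ξ).mulVec (F ξ))
      ≤ ENNReal.ofReal (Real.sqrt 6 * (32 / 9)) * fbNorm ψ (-1) r F := by
  have hlam0 : 0 < lamr := lt_of_lt_of_le one_pos hl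
  unfold clNorm fbNorm
  rw [← lnorm_const_mul hr]
  refine lnorm_mono fun j => ?_
  set K : ℝ≥0∞ := ∫⁻ ξ, (‖psij ψ j ξ • F ξ‖₊ : ℝ≥0∞) with hK
  have htn := tnorm_le T hl (bj_pos j) K _
    (fun t ht => integrand_bound hψ F j ht)
  calc (2 : ℝ≥0∞) ^ ((j : ℝ) * s) * tnorm (ENNReal.ofReal lamr) T
        (fun t => ∫⁻ ξ, (‖psij ψ j ξ • (expM t ξ).mulVec (F ξ)‖₊ : ℝ≥0∞))
      ≤ (2 : ℝ≥0∞) ^ ((j : ℝ) * s)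
          * (ENNReal.ofReal (Real.sqrt 6 * (1 / bj j) ^ (1 / lamr)) * K) :=
        mul_le_mul_right htn _
    _ ≤ ENNReal.ofReal (Real.sqrt 6 * (32 / 9)) * ((2 : ℝ≥0∞) ^ ((j : ℝ) * (-1)) * K) := by
        have hb : (1 / bj j) = 32 / 9 * (2 : ℝ) ^ (-(2 * (j : ℝ))) := by
          unfold bj
          rw [Real.rpow_neg (by norm_num : (0:ℝ) ≤ 2)]
          field_simp
        have hsplit : (1 / bj j) ^ (1 / lamr)
            = (32 / 9 : ℝ) ^ (1 / lamr) * (2 : ℝ) ^ (-(2 * (j : ℝ)) * (1 / lamr)) := by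
          rw [hb, Real.mul_rpow (by norm_num) (Real.rpow_pos_of_pos (by norm_num) _).le,
            ← Real.rpow_mul (by norm_num : (0:ℝ) ≤ 2)]
        have hc : (32 / 9 : ℝ) ^ (1 / lamr) ≤ 32 / 9 := by
          nth_rewrite 2 [show (32 / 9 : ℝ) = (32 / 9 : ℝ) ^ (1:ℝ) by rw [Real.rpow_one]]
          refine Real.rpow_le_rpow_of_exponent_le (by norm_num) ?_
          rw [div_le_one hlam0]
          exact hl
        have hstep : Real.sqrt 6 * (1 / bj j) ^ (1 / lamr)
            ≤ Real.sqrt 6 * (32 / 9) * (2 : ℝ) ^ (-(2 * (j : ℝ)) * (1 / lamr)) := by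
          have h2p : (0:ℝ) ≤ (2 : ℝ) ^ (-(2 * (j : ℝ)) * (1 / lamr)) :=
            (Real.rpow_pos_of_pos (by norm_num) _).le
          rw [hsplit, ← mul_assoc]
          exact mul_le_mul_of_nonneg_right
            (mul_le_mul_of_nonneg_left hc (Real.sqrt_nonneg 6)) h2p
        have hofreal : ENNReal.ofReal (Real.sqrt 6 * (1 / bj j) ^ (1 / lamr))
            ≤ ENNReal.ofReal (Real.sqrt 6 * (32 / 9))
              * (2 : ℝ≥0∞) ^ (-(2 * (j : ℝ)) * (1 / lamr)) := by
          calc ENNReal.ofReal (Real.sqrt 6 * (1 / bj j) ^ (1 / lamr))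
              ≤ ENNReal.ofReal (Real.sqrt 6 * (32 / 9)
                  * (2 : ℝ) ^ (-(2 * (j : ℝ)) * (1 / lamr))) := ENNReal.ofReal_le_ofReal hstep
            _ = ENNReal.ofReal (Real.sqrt 6 * (32 / 9))
                  * ENNReal.ofReal ((2 : ℝ) ^ (-(2 * (j : ℝ)) * (1 / lamr))) := by
                rw [ENNReal.ofReal_mul (by positivity)]
            _ = ENNReal.ofReal (Real.sqrt 6 * (32 / 9))
                  * (2 : ℝ≥0∞) ^ (-(2 * (j : ℝ)) * (1 / lamr)) := by
                rw [← ENNReal.ofReal_rpow_of_pos (by norm_num : (0:ℝ) < 2)]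
                norm_num
        calc (2 : ℝ≥0∞) ^ ((j : ℝ) * s)
              * (ENNReal.ofReal (Real.sqrt 6 * (1 / bj j) ^ (1 / lamr)) * K)
            ≤ (2 : ℝ≥0∞) ^ ((j : ℝ) * s)
              * (ENNReal.ofReal (Real.sqrt 6 * (32 / 9))
                  * (2 : ℝ≥0∞) ^ (-(2 * (j : ℝ)) * (1 / lamr)) * K) := by
              exact mul_le_mul_right (mul_le_mul_left hofreal K) _
          _ = ENNReal.ofReal (Real.sqrt 6 * (32 / 9))
                * ((2 : ℝ≥0∞) ^ ((j : ℝ) * s) * (2 : ℝ≥0∞) ^ (-(2 * (j : ℝ)) * (1 / lamr)) * K) := by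
              ring
          _ = ENNReal.ofReal (Real.sqrt 6 * (32 / 9)) * ((2 : ℝ≥0∞) ^ ((j : ℝ) * (-1)) * K) := by
              congr 2
              rw [← ENNReal.rpow_add _ _ two_ne_zero ENNReal.ofNat_ne_top]
              congr 1
              linear_combination (j : ℝ) * hrel

/-- **Lemma 2.3, Fourier-side form.** For α ∈ (0,1) there is a constant
C = C(α) > 0, depending only on α, such that for every r ∈ [1,∞], T ∈ (0,∞] and every measurable
F : ℝ³ → ℂ⁶ with N^{−1}_r(F) < ∞, the function G(t,ξ) = e^{−tA(ξ)}F(ξ) satisfies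
N^{α}_{r,2/(1+α),T}(G) ≤ C·N^{−1}_r(F) and N^{−α}_{r,2/(1−α),T}(G) ≤ C·N^{−1}_r(F). -/
theorem semigroup_cheminLerner_bound (α : ℝ) (hα0 : 0 < α) (hα1 : α < 1) :
    ∃ C : ℝ, 0 < C ∧ ∀ ψ : R3 → ℝ, IsLP ψ → ∀ r : ℝ≥0∞, 1 ≤ r → ∀ T : ℝ≥0∞, 0 < T →
      ∀ F : R3 → C6, Measurable F → fbNorm ψ (-1) r F < ∞ →
        clNorm ψ α r (ENNReal.ofReal (2 / (1 + α))) T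
            (fun t ξ => (expM t ξ).mulVec (F ξ)) ≤ ENNReal.ofReal C * fbNorm ψ (-1) r F ∧
        clNorm ψ (-α) r (ENNReal.ofReal (2 / (1 - α))) T
            (fun t ξ => (expM t ξ).mulVec (F ξ)) ≤ ENNReal.ofReal C * fbNorm ψ (-1) r F := by
  refine ⟨Real.sqrt 6 * (32 / 9), by positivity, fun ψ hψ r hr T hT F hFmeas hFfin => ?_⟩
  have h1α : (0:ℝ) < 1 + α := by linarith
  have h2α : (0:ℝ) < 1 - α := by linarith
  have hne1 : (2 : ℝ) / (1 + α) ≠ 0 := by positivity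
  have hne2 : (2 : ℝ) / (1 - α) ≠ 0 := by positivity
  constructor
  · refine main_case ψ hψ r hr T F ?_ ?_
    · rw [le_div_iff₀ h1α]; linarith
    · field_simp
      ring
  · refine main_case ψ hψ r hr T F ?_ ?_
    · rw [le_div_iff₀ h2α]; linarith
    · field_simp
      ring
end
end
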